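/- Let φ₁, φ₂, φ₁', φ₂' be continuous semipositive metrics on a line bundle L over an n-dimensional reduced proper scheme over a non-Archimedean field, and let d(φ,ψ) = sup_{X^an}|φ−ψ| be the sup-distance. Then |E(L,φ₁,φ₂) − E(L,φ₁',φ₂')| ≤ (d(φ₁,φ₁') + d(φ₂,φ₂'))·deg_L(X). -/

import Mathlib

/-!
With `F = (n + 1) E`, the cocycle rule `F(a, c) = F(a, b) + F(b, c)` gives
`E(φ₁, φ₂) - E(φ₁', φ₂') = (F(φ₁, φ₁') + F(φ₂', φ₂)) / (n + 1)`, and each of the `n + 1`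
integrals in `F(a, b)` is at most `‖a - b‖ deg_L(X)` in absolute value. The cocycle rule comes
from replacing the factors `dd^c c` of `(dd^c a)^p ∧ (dd^c c)^{n-p}` by `dd^c b` one at a time:
integration by parts, together with the symmetry of the mixed measures, rewrites each increment,
and the resulting double sum over the triangle `p + q < n` collapses.
-/

open MeasureTheory Finset

theorem Finset.sum_range_sum_range_sub_eq {G : Type*} [AddCommGroup G] (n : ℕ)
    (g : ℕ → ℕ → G) :
    ∑ j ∈ range (n + 1), ∑ q ∈ range (n - j), (g (j + 1) q - g j (q + 1)) =
      ∑ j ∈ range (n + 1), g j 0 - ∑ q ∈ range (n + 1), g 0 q := by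
  induction n generalizing g with
  | zero => simp
  | succ n ih =>
    rw [sum_range_succ', Nat.sub_zero]
    simp only [Nat.add_sub_add_right]
    rw [ih fun p q => g (p + 1) q, sum_sub_distrib, sum_range_succ' (fun j => g j 0),
      sum_range_succ' (fun q => g 0 q)]
    abel

theorem neg_eq_of_cocycle {M G : Type*} [AddGroup G] {d : M → M → G}
    (hcocycle : ∀ a b c, d a b + d b c = d a c) (a b : M) : -d a b = d b a := by
  have hzero : d b b = 0 := add_eq_left.mp (hcocycle b b b)
  exact neg_eq_of_add_eq_zero_left (by rw [hcocycle, hzero])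

section BlockTuple

variable {M : Type*} {n : ℕ}

def blockTuple (a b c : M) (p q : ℕ) : Fin n → M :=
  fun i => if (i : ℕ) < p then a else if (i : ℕ) < p + q then b else c

theorem blockTuple_zero_right (a b c : M) (p : ℕ) :
    blockTuple a b c p 0 = fun i : Fin n => if (i : ℕ) < p then a else c := by
  funext i
  by_cases h : (i : ℕ) < p <;> simp [blockTuple, h]

theorem blockTuple_zero_left (a b c : M) (q : ℕ) :
    blockTuple a b c 0 q = fun i : Fin n => if (i : ℕ) < q then b else c := by
  funext i
  simp [blockTuple]

theorem blockTuple_sub {a b c : M} {p : ℕ} (hp : p ≤ n) :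
    blockTuple a b c p (n - p) = fun i : Fin n => if (i : ℕ) < p then a else b := by
  funext i
  have := i.isLt
  simp only [blockTuple]
  split_ifs <;> first | rfl | omega

variable {a b c : M} {p q : ℕ}

theorem blockTuple_succ_right (h : p + q < n) :
    blockTuple a b c p (q + 1) = Function.update (blockTuple a b c p q) ⟨p + q, h⟩ b := by
  funext i
  simp only [blockTuple, Function.update_apply, Fin.ext_iff]
  split_ifs <;> first | rfl | omega

theorem update_blockTuple_self (h : p + q < n) :
    Function.update (blockTuple a b c p q) ⟨p + q, h⟩ c = blockTuple a b c p q :=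
  Function.update_eq_self_iff.mpr (by simp [blockTuple])

theorem update_blockTuple_eq_comp_swap (h : p + q < n) :
    Function.update (blockTuple a b c p q) ⟨p + q, h⟩ a =
      blockTuple a b c (p + 1) q ∘ Equiv.swap ⟨p, by omega⟩ ⟨p + q, h⟩ := by
  funext i
  simp only [blockTuple, Function.update_apply, Function.comp_apply, Equiv.swap_apply_def,
    Fin.ext_iff, apply_ite Fin.val]
  split_ifs <;> first | rfl | omega

end BlockTuple

section Energy

variable {X M : Type*} [MeasurableSpace X] {n : ℕ}

/-- `(n + 1)` times the energy: `∑_{j ≤ n} ∫ (a - b) (dd^c a)^j ∧ (dd^c b)^{n - j}`. -/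
noncomputable def energySum [TopologicalSpace X] (d : M → M → C(X, ℝ))
    (μ : (Fin n → M) → Measure X) (a b : M) : ℝ :=
  ∑ j ∈ range (n + 1), ∫ x, d a b x ∂μ (fun i => if (i : ℕ) < j then a else b)

theorem integral_blockTuple_succ_sub [TopologicalSpace X] {d : M → M → C(X, ℝ)}
    {μ : (Fin n → M) → Measure X}
    (hsymm : ∀ (v : Fin n → M) (σ : Equiv.Perm (Fin n)), μ (v ∘ σ) = μ v)
    (hparts : ∀ (i : Fin n) (u₁ u₂ v₁ v₂ : M) (w : Fin n → M),
      ((∫ x, d u₁ u₂ x ∂μ (Function.update w i v₁)) -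
        ∫ x, d u₁ u₂ x ∂μ (Function.update w i v₂)) =
      ((∫ x, d v₁ v₂ x ∂μ (Function.update w i u₁)) -
        ∫ x, d v₁ v₂ x ∂μ (Function.update w i u₂)))
    (a b c : M) {p q : ℕ} (h : p + q < n) :
    ∫ x, d a b x ∂μ (blockTuple a b c p (q + 1)) - ∫ x, d a b x ∂μ (blockTuple a b c p q) =
      ∫ x, d b c x ∂μ (blockTuple a b c (p + 1) q) -
        ∫ x, d b c x ∂μ (blockTuple a b c p (q + 1)) := by
  have key := hparts ⟨p + q, h⟩ a b b c (blockTuple a b c p q)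
  rwa [← blockTuple_succ_right h, update_blockTuple_self h, update_blockTuple_eq_comp_swap h,
    hsymm] at key

theorem energySum_add [TopologicalSpace X] [CompactSpace X] [BorelSpace X]
    {d : M → M → C(X, ℝ)} (hcocycle : ∀ a b c : M, d a b + d b c = d a c)
    {μ : (Fin n → M) → Measure X} (hfin : ∀ v, IsFiniteMeasure (μ v))
    (hsymm : ∀ (v : Fin n → M) (σ : Equiv.Perm (Fin n)), μ (v ∘ σ) = μ v)
    (hparts : ∀ (i : Fin n) (u₁ u₂ v₁ v₂ : M) (w : Fin n → M),
      ((∫ x, d u₁ u₂ x ∂μ (Function.update w i v₁)) -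
        ∫ x, d u₁ u₂ x ∂μ (Function.update w i v₂)) =
      ((∫ x, d v₁ v₂ x ∂μ (Function.update w i u₁)) -
        ∫ x, d v₁ v₂ x ∂μ (Function.update w i u₂)))
    (a b c : M) :
    energySum d μ a b + energySum d μ b c = energySum d μ a c := by
  set A : ℕ → ℕ → ℝ := fun p q => ∫ x, d a b x ∂μ (blockTuple a b c p q)
  set B : ℕ → ℕ → ℝ := fun p q => ∫ x, d b c x ∂μ (blockTuple a b c p q)
  have hintegral_add (v : Fin n → M) :
      ∫ x, d a b x ∂μ v + ∫ x, d b c x ∂μ v = ∫ x, d a c x ∂μ v := by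
    have hint (f : C(X, ℝ)) : Integrable f (μ v) :=
      f.continuous.integrable_of_hasCompactSupport (.of_compactSpace f)
    rw [← integral_add (hint _) (hint _), ← hcocycle a b c]
    rfl
  have htelescope (j : ℕ) :
      A j (n - j) - A j 0 = ∑ q ∈ range (n - j), (B (j + 1) q - B j (q + 1)) := by
    rw [← sum_range_sub (A j)]
    exact sum_congr rfl fun q hq =>
      integral_blockTuple_succ_sub hsymm hparts a b c (by simp at hq; omega)
  have hab : energySum d μ a b = ∑ j ∈ range (n + 1), A j (n - j) :=
    sum_congr rfl fun j hj => by simp only [A, blockTuple_sub (by simp at hj; omega)]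
  have hbc : energySum d μ b c = ∑ j ∈ range (n + 1), B 0 j :=
    sum_congr rfl fun j _ => by simp only [B, blockTuple_zero_left]
  have hac : energySum d μ a c = ∑ j ∈ range (n + 1), (A j 0 + B j 0) :=
    sum_congr rfl fun j _ => by simp only [A, B, hintegral_add, blockTuple_zero_right]
  have hdouble := sum_range_sum_range_sub_eq n B
  rw [← sum_congr rfl fun j _ => htelescope j, sum_sub_distrib] at hdouble
  rw [hab, hbc, hac, sum_add_distrib]
  linarith

theorem abs_energySum_le [TopologicalSpace X] [CompactSpace X] (d : M → M → C(X, ℝ))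
    {μ : (Fin n → M) → Measure X} (hfin : ∀ v, IsFiniteMeasure (μ v)) {C : ℝ}
    (hmass : ∀ v, (μ v Set.univ).toReal ≤ C) (a b : M) :
    |energySum d μ a b| ≤ (n + 1) * (‖d a b‖ * C) := by
  calc |energySum d μ a b|
      ≤ ∑ j ∈ range (n + 1), |∫ x, d a b x ∂μ (fun i => if (i : ℕ) < j then a else b)| :=
        abs_sum_le_sum_abs _ _
    _ ≤ ∑ _j ∈ range (n + 1), ‖d a b‖ * C := by
        refine sum_le_sum fun j _ => ?_
        rw [← Real.norm_eq_abs]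
        refine (norm_integral_le_of_norm_le_const
          (ae_of_all _ (d a b).norm_coe_le_norm)).trans ?_
        exact mul_le_mul_of_nonneg_left (hmass _) (norm_nonneg _)
    _ = (n + 1) * (‖d a b‖ * C) := by simp

end Energy

/-- **Lipschitz continuity of the energy** (Proposition 2.18(k)).
Abstract setting: `Xan` is the compact Berkovich analytification of an
`n`-dimensional reduced proper scheme, `M` is the collection of continuous
semipositive metrics on a line bundle `L`, `φdiff φ ψ` is the continuous
function `φ − ψ` on `Xan` (so `d(φ,ψ) = sup|φ−ψ| = ‖φdiff φ ψ‖`), and `μ v`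
are the mixed Chambert-Loir measures `dd^cv₁ ∧ ⋯ ∧ dd^cv_n`: positive Radon
measures with total mass `deg_L(X)`, symmetric in the metrics and satisfying
the integration-by-parts symmetry (polarized form `hparts`).  The energy is
`E(φ,ψ) = (1/(n+1)) Σ_{j=0}^n ∫ (φ−ψ) (dd^cφ)^j ∧ (dd^cψ)^{n−j}`.
Then `|E(φ₁,φ₂) − E(φ₁',φ₂')| ≤ (d(φ₁,φ₁') + d(φ₂,φ₂'))·deg_L(X)`. -/
theorem stmt10 {Xan M : Type} [TopologicalSpace Xan] [CompactSpace Xan]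
    [MeasurableSpace Xan] [BorelSpace Xan]
    (n : ℕ) (degL : ℝ)
    (φdiff : M → M → C(Xan, ℝ))
    (hcocycle : ∀ a b c : M, φdiff a b + φdiff b c = φdiff a c)
    (μ : (Fin n → M) → Measure Xan)
    (hfin : ∀ v, IsFiniteMeasure (μ v))
    (hmass : ∀ v, (μ v Set.univ).toReal = degL)
    (hsymm : ∀ (v : Fin n → M) (σ : Equiv.Perm (Fin n)), μ (v ∘ σ) = μ v)
    (hparts : ∀ (i : Fin n) (u₁ u₂ v₁ v₂ : M) (w : Fin n → M),
      ((∫ x, φdiff u₁ u₂ x ∂ μ (Function.update w i v₁)) -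
        ∫ x, φdiff u₁ u₂ x ∂ μ (Function.update w i v₂)) =
      ((∫ x, φdiff v₁ v₂ x ∂ μ (Function.update w i u₁)) -
        ∫ x, φdiff v₁ v₂ x ∂ μ (Function.update w i u₂)))
    (E : M → M → ℝ)
    (hE : ∀ φ ψ : M, E φ ψ = (1 / (n + 1 : ℝ)) *
      ∑ j ∈ Finset.range (n + 1),
        ∫ x, φdiff φ ψ x ∂ μ (fun i => if (i : ℕ) < j then φ else ψ))
    (φ₁ φ₂ φ₁' φ₂' : M) :
    |E φ₁ φ₂ - E φ₁' φ₂'| ≤ (‖φdiff φ₁ φ₁'‖ + ‖φdiff φ₂ φ₂'‖) * degL := by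
  have hadd := energySum_add hcocycle hfin hsymm hparts
  have hbound := abs_energySum_le φdiff hfin fun v => (hmass v).le
  set F := energySum φdiff μ
  have hEF (φ ψ : M) : E φ ψ = F φ ψ / (n + 1) := (hE φ ψ).trans (one_div_mul_eq_div _ _)
  have hdiff : E φ₁ φ₂ - E φ₁' φ₂' = (F φ₁ φ₁' + F φ₂' φ₂) / (n + 1) := by
    rw [hEF, hEF, ← hadd φ₁ φ₁' φ₂, ← hadd φ₁' φ₂' φ₂]
    ring
  have hnorm : ‖φdiff φ₂' φ₂‖ = ‖φdiff φ₂ φ₂'‖ := by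
    rw [← neg_eq_of_cocycle hcocycle, norm_neg]
  have hn : (0 : ℝ) < n + 1 := by positivity
  rw [hdiff, abs_div, abs_of_pos hn, div_le_iff₀ hn]
  calc |F φ₁ φ₁' + F φ₂' φ₂| ≤ |F φ₁ φ₁'| + |F φ₂' φ₂| := abs_add_le _ _
    _ ≤ (n + 1) * (‖φdiff φ₁ φ₁'‖ * degL) + (n + 1) * (‖φdiff φ₂' φ₂‖ * degL) :=
        add_le_add (hbound _ _) (hbound _ _)
    _ = (‖φdiff φ₁ φ₁'‖ + ‖φdiff φ₂ φ₂'‖) * degL * (n + 1) := by rw [hnorm]; ring
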